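/- arXiv:2605.19443 — 4 statements merged into one kernel-verified Lean document; each statement's English description precedes it below -/
import Mathlib

section
/- Let n ≥ 1 and m ≥ 3 be integers. If g ∈ GL_n(ℤ) has finite order and g ≡ 1 (mod m), i.e., every entry of g − 1 is divisible by m, then g = 1. -/
/-!
Replacing `g` by a suitable power, we may assume that `g ≠ 1` has prime order `q`. Since
`m ≥ 3`, some prime power `p ^ k ∣ m` has `k + 2 ≤ k * p`: an odd prime with `k = 1`, or `4`.
Writing `g = 1 + p ^ k y`, the binomial expansion of `(1 + p ^ k y) ^ q = 1` shows that
`q p ^ k y` vanishes modulo `p ^ (k + 2)` if `q = p` and modulo `p ^ (2 k)` otherwise; either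
way `g ≡ 1 (mod p ^ (k + 1))`. Iterating, `g - 1` is divisible by every power of `p`, so `g = 1`.
-/

open Finset

section Ring

variable {R : Type*} [Ring R]

theorem Nat.Coprime.natCast_dvd_of_dvd_mul_right {a b : ℕ} (hab : a.Coprime b) {x : R}
    (h : (a : R) ∣ x * b) : (a : R) ∣ x := by
  obtain ⟨u, v, huv⟩ := Nat.isCoprime_iff_coprime.mpr hab
  have hx : x = a * (x * u) + x * b * v := by
    calc x = x * ((u * a + v * b : ℤ) : R) := by rw [huv, Int.cast_one, mul_one]
      _ = a * (x * u) + x * b * v := by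
        push_cast
        rw [mul_add, ← mul_assoc, ← (Nat.cast_commute a _).eq, mul_assoc x,
          ← (Nat.cast_commute b (v : R)).eq]
  rw [hx]
  exact dvd_add (Dvd.intro _ rfl) (h.mul_right _)

theorem natCast_pow_succ_dvd_sub_one_of_pow_eq_one {p q k : ℕ} (hp : p.Prime) (hq : q.Prime)
    (hkp : k + 2 ≤ k * p) (hreg : IsLeftRegular (p : R)) {A : R} (hA : A ^ q = 1)
    (hk : (p : R) ^ k ∣ A - 1) : (p : R) ^ (k + 1) ∣ A - 1 := by
  obtain ⟨y, hy⟩ := hk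
  set x := A - 1
  have hpow (j : ℕ) : (p : R) ^ (k * j) ∣ x ^ j := by
    rw [hy, ((Nat.cast_commute p y).pow_left k).mul_pow, pow_mul]
    exact dvd_mul_right _ _
  have hbinom : x * q + ∑ j ∈ Ico 2 (q + 1), x ^ j * (q.choose j : R) = 0 := by
    have h := (Commute.one_right x).add_pow q
    rw [sub_add_cancel, hA, range_eq_Ico, sum_eq_sum_Ico_succ_bot (by omega),
      sum_eq_sum_Ico_succ_bot (by linarith [hq.two_le])] at h
    simpa using h
  have htail (e : ℕ) (h : ∀ j ∈ Ico 2 (q + 1), (p : R) ^ e ∣ x ^ j * (q.choose j : R)) :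
      (p : R) ^ e ∣ x * q := by
    rw [eq_neg_of_add_eq_zero_left hbinom, dvd_neg]
    exact dvd_sum h
  obtain rfl | hpq := eq_or_ne p q
  · -- `p` divides the middle binomial coefficients, and the last term is `x ^ p`.
    have h : (p : R) ^ (k + 2) ∣ x * p := htail _ fun j hj => by
      obtain ⟨hj2, hjp⟩ : 2 ≤ j ∧ j < p + 1 := mem_Ico.mp hj
      obtain hjp | rfl := (Nat.lt_succ_iff.mp hjp).lt_or_eq
      · obtain ⟨d, hd⟩ := hp.dvd_choose_self (by omega) hjp
        rw [hd, Nat.cast_mul, ← mul_assoc, ← (Nat.cast_commute p _).eq]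
        refine ((pow_dvd_pow _ (by nlinarith : k + 2 ≤ k * j + 1)).trans ?_).mul_right _
        rw [pow_succ']
        exact mul_dvd_mul_left _ (hpow j)
      · exact ((pow_dvd_pow _ hkp).trans (hpow j)).mul_right _
    rw [← (Nat.cast_commute p x).eq, pow_succ'] at h
    obtain ⟨z, hz⟩ := h
    exact ⟨z, hreg (show (p : R) * x = p * (p ^ (k + 1) * z) by rw [hz, mul_assoc])⟩
  · have h : (p : R) ^ (k + 1) ∣ x * q := htail _ fun j hj => by
      have hkj : k + 1 ≤ k * j := by rw [mem_Ico] at hj; nlinarith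
      exact ((pow_dvd_pow _ hkj).trans (hpow j)).mul_right _
    rw [← Nat.cast_pow] at h ⊢
    exact (((Nat.coprime_primes hp hq).mpr hpq).pow_left _).natCast_dvd_of_dvd_mul_right h

theorem natCast_pow_dvd_sub_one_of_pow_eq_one {p q k : ℕ} (hp : p.Prime) (hq : q.Prime)
    (hkp : k + 2 ≤ k * p) (hreg : IsLeftRegular (p : R)) {A : R} (hA : A ^ q = 1)
    (hk : (p : R) ^ k ∣ A - 1) (j : ℕ) : (p : R) ^ j ∣ A - 1 := by
  have h (t : ℕ) : (p : R) ^ (k + t) ∣ A - 1 := by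
    induction t with
    | zero => exact hk
    | succ t ih =>
      have hkp' : k + t + 2 ≤ (k + t) * p := by nlinarith [hp.two_le]
      exact natCast_pow_succ_dvd_sub_one_of_pow_eq_one hp hq hkp' hreg hA ih
  exact (pow_dvd_pow _ (Nat.le_add_left j k)).trans (h j)

end Ring

namespace Matrix

variable {n : Type*} [Fintype n] [DecidableEq n]

theorem natCast_mul_apply {R : Type*} [Semiring R] (c : ℕ) (X : Matrix n n R) (i j : n) :
    ((c : Matrix n n R) * X) i j = c * X i j := by
  rw [← diagonal_natCast, diagonal_mul]

theorem natCast_dvd_iff {R : Type*} [CommSemiring R] {c : ℕ} {X : Matrix n n R} :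
    (c : Matrix n n R) ∣ X ↔ ∀ i j, (c : R) ∣ X i j := by
  constructor
  · rintro ⟨Y, rfl⟩ i j
    exact ⟨Y i j, natCast_mul_apply c Y i j⟩
  · intro h
    choose Y hY using h
    exact ⟨of Y, ext fun i j => by rw [natCast_mul_apply, of_apply, ← hY]⟩

theorem isLeftRegular_natCast {R : Type*} [Semiring R] {c : ℕ} (hc : IsLeftRegular (c : R)) :
    IsLeftRegular (c : Matrix n n R) := fun X Y h =>
  ext fun i j => hc (by simpa only [natCast_mul_apply] using congrFun₂ h i j)

theorem eq_zero_of_forall_natCast_pow_dvd {p : ℕ} (hp : p ≠ 1) {X : Matrix n n ℤ}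
    (h : ∀ j, (p : Matrix n n ℤ) ^ j ∣ X) : X = 0 := by
  ext i j
  by_contra hX
  obtain ⟨e, he⟩ := Int.finiteMultiplicity_iff.mpr ⟨(by simpa using hp : (p : ℤ).natAbs ≠ 1), hX⟩
  have hpe := h (e + 1)
  rw [← Nat.cast_pow, natCast_dvd_iff] at hpe
  exact he (by exact_mod_cast hpe i j)

end Matrix

theorem Nat.exists_prime_pow_dvd_of_three_le {m : ℕ} (hm : 3 ≤ m) :
    ∃ p k, p.Prime ∧ k + 2 ≤ k * p ∧ p ^ k ∣ m := by
  by_cases h : ∃ p, p.Prime ∧ p ∣ m ∧ p ≠ 2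
  · obtain ⟨p, hp, hpm, hp2⟩ := h
    exact ⟨p, 1, hp, by have := hp.two_le; omega, by simpa⟩
  · push Not at h
    have hm2 := Nat.eq_prime_pow_of_unique_prime_dvd (by omega) fun hd hdm => h _ hd hdm
    refine ⟨2, 2, Nat.prime_two, le_rfl, hm2 ▸ pow_dvd_pow 2 ?_⟩
    by_contra! hl
    interval_cases h : m.primeFactorsList.length <;> omega

theorem IsOfFinOrder.exists_prime_orderOf_pow {G : Type*} [Monoid G] {g : G} (hg : IsOfFinOrder g)
    (h1 : g ≠ 1) : ∃ t, (orderOf (g ^ t)).Prime :=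
  ⟨orderOf g / (orderOf g).minFac, by
    rw [orderOf_pow_orderOf_div hg.orderOf_pos.ne' (Nat.minFac_dvd _)]
    exact Nat.minFac_prime (mt orderOf_eq_one_iff.mp h1)⟩

theorem stmt5_general (n m : ℕ) (hm : 3 ≤ m)
    (g : Matrix.GeneralLinearGroup (Fin n) ℤ)
    (hfin : IsOfFinOrder g)
    (hdiv : ∀ i j, (m : ℤ) ∣
      ((g : Matrix (Fin n) (Fin n) ℤ) i j - (1 : Matrix (Fin n) (Fin n) ℤ) i j)) :
    g = 1 := by
  by_contra hg
  obtain ⟨p, k, hp, hkp, hpk⟩ := Nat.exists_prime_pow_dvd_of_three_le hm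
  obtain ⟨t, hq⟩ := hfin.exists_prime_orderOf_pow hg
  set a := g ^ t
  have hgm : (m : Matrix (Fin n) (Fin n) ℤ) ∣ g - 1 := Matrix.natCast_dvd_iff.mpr hdiv
  have hk : (p : Matrix (Fin n) (Fin n) ℤ) ^ k ∣ a - 1 := by
    rw [← Nat.cast_pow, Units.val_pow_eq_pow_val]
    exact (Nat.cast_dvd_cast hpk).trans (hgm.trans (sub_one_dvd_pow_sub_one _ _))
  have hA : (a : Matrix (Fin n) (Fin n) ℤ) ^ orderOf a = 1 := by
    rw [← Units.val_pow_eq_pow_val, pow_orderOf_eq_one, Units.val_one]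
  have hreg : IsLeftRegular (p : Matrix (Fin n) (Fin n) ℤ) :=
    Matrix.isLeftRegular_natCast (IsRegular.of_ne_zero (Nat.cast_ne_zero.mpr hp.ne_zero)).left
  have ha : (a : Matrix (Fin n) (Fin n) ℤ) - 1 = 0 := Matrix.eq_zero_of_forall_natCast_pow_dvd
    hp.ne_one (natCast_pow_dvd_sub_one_of_pow_eq_one hp hq hkp hreg hA hk)
  exact hq.ne_one (orderOf_eq_one_iff.mpr (Units.ext (sub_eq_zero.mp ha)))

/-- Minkowski–Serre: Let `n ≥ 1` and `m ≥ 3`. If `g ∈ GL_n(ℤ)` has finite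
order and `g ≡ 1 (mod m)` (every entry of `g - 1` is divisible by `m`), then `g = 1`. -/
theorem stmt5 (n m : ℕ) (hn : 1 ≤ n) (hm : 3 ≤ m)
    (g : Matrix.GeneralLinearGroup (Fin n) ℤ)
    (hfin : IsOfFinOrder g)
    (hdiv : ∀ i j, (m : ℤ) ∣
      ((g : Matrix (Fin n) (Fin n) ℤ) i j - (1 : Matrix (Fin n) (Fin n) ℤ) i j)) :
    g = 1 :=
  stmt5_general n m hm g hfin hdiv
end

section
/- If (V, h) is a finite-dimensional anisotropic hermitian space over K (i.e., h(v, v) = 0 implies v = 0), then the unitary group U(V, h) = {g ∈ GL_K(V) : h(g·x, g·y) = h(x, y) for all x, y} is a compact subgroup of GL_K(V) with its p-adic topology. -/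
/-!
In a basis of `V` with Gram matrix `G`, a linear map with matrix `M` preserves `h` iff
`Mᵀ G σ(M) = G`, with `σ` applied entrywise; anisotropy makes every such map injective,
hence invertible, so the unitary group is this closed set of matrices. The `j`-th column `w`
of such an `M` satisfies `Q w = G j j` for the anisotropic form `Q w = w ⬝ G σ(w)`.
Since `Q (c • w) = c σ(c) Q w` and `‖c‖ ≤ C ‖σ c‖` (`σ` is a linear automorphism of the
finite-dimensional `ℚ_p`-space `K`), the minimum of `‖Q‖` on the compact unit sphere of `Kⁿ`
yields `‖w‖² ≤ D ‖Q w‖`. Hence the level sets of `Q`, and with them the unitary group, are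
bounded.
-/

open Matrix

def LinearMap.ofHermitian {K V : Type*} [CommRing K] [AddCommGroup V] [Module K V]
    (σ : K →+* K) (h : V → V → K)
    (hlin : ∀ (c : K) (x x' y : V), h (c • x + x') y = c * h x y + h x' y)
    (hherm : ∀ x y, h y x = σ (h x y)) : V →ₗ[K] V →ₛₗ[σ] K :=
  have hadd x x' y : h (x + x') y = h x y + h x' y := by simpa using hlin 1 x x' y
  have hzero y : h 0 y = 0 := by simpa using hadd 0 0 y
  have hsmul (c : K) x y : h (c • x) y = c * h x y := by simpa [hzero] using hlin c x 0 y
  .mk₂'ₛₗ (RingHom.id K) σ h hadd hsmul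
    (fun x y y' => by rw [hherm, hadd, map_add, ← hherm, ← hherm])
    (fun c x y => by rw [hherm, hsmul, map_mul, ← hherm, smul_eq_mul])

theorem LinearMap.toMatrix₂_comp_compl₂ {R M₁ M₂ M₁' M₂' n m n' m' : Type*} [CommRing R]
    [AddCommGroup M₁] [Module R M₁] [AddCommGroup M₂] [Module R M₂]
    [AddCommGroup M₁'] [Module R M₁'] [AddCommGroup M₂'] [Module R M₂']
    [Fintype n] [Fintype m] [Fintype n'] [Fintype m'] [DecidableEq n] [DecidableEq m]
    [DecidableEq n'] [DecidableEq m'] {σ : R →+* R}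
    (b₁ : Module.Basis n R M₁) (b₂ : Module.Basis m R M₂)
    (b₁' : Module.Basis n' R M₁') (b₂' : Module.Basis m' R M₂')
    (B : M₁ →ₗ[R] M₂ →ₛₗ[σ] R) (l : M₁' →ₗ[R] M₁) (r : M₂' →ₗ[R] M₂) :
    toMatrix₂ b₁' b₂' ((B ∘ₗ l).compl₂ r) =
      (toMatrix b₁' b₁ l)ᵀ * toMatrix₂ b₁ b₂ B * (toMatrix b₂' b₂ r).map σ := by
  ext i j
  rw [toMatrix₂_apply, compl₂_apply, comp_apply, apply_eq_dotProduct_toMatrix₂_mulVec b₁ b₂,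
    dotProduct_mulVec]
  simp only [mul_apply, transpose_apply, map_apply, toMatrix_apply, dotProduct, vecMul,
    Function.comp_apply, RingHom.id_apply]

theorem LinearMap.injective_of_apply_self_eq {R V : Type*} [CommRing R] [AddCommGroup V]
    [Module R V] {σ : R →+* R} {B : V →ₗ[R] V →ₛₗ[σ] R} (hB : ∀ x, B x x = 0 → x = 0)
    {f : V →ₗ[R] V} (hf : ∀ x, B (f x) (f x) = B x x) : Function.Injective f := by
  refine (injective_iff_map_eq_zero f).mpr fun x hx => hB x ?_
  rw [← hf, hx, map_zero]

theorem setOf_toMatrix_isometry_eq {K V ι : Type*} [Field K] [AddCommGroup V] [Module K V]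
    [Fintype ι] [DecidableEq ι] {σ : K →+* K} (b : Module.Basis ι K V)
    {B : V →ₗ[K] V →ₛₗ[σ] K} (hB : ∀ x, B x x = 0 → x = 0) :
    {M : Matrix ι ι K | ∃ g : V ≃ₗ[K] V, LinearMap.toMatrix b b (g : V →ₗ[K] V) = M ∧
        ∀ x y, B (g x) (g y) = B x y} =
      {M | Mᵀ * LinearMap.toMatrix₂ b b B * M.map σ = LinearMap.toMatrix₂ b b B} := by
  have := Module.Finite.of_basis b
  ext M
  constructor
  · rintro ⟨g, rfl, hg⟩
    rw [Set.mem_ofPred_eq, ← LinearMap.toMatrix₂_comp_compl₂]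
    exact congrArg _ (LinearMap.ext₂ hg)
  · intro hM
    have hf : (B ∘ₗ toLin b b M).compl₂ (toLin b b M) = B :=
      (LinearMap.toMatrix₂ b b).injective (by
        rw [LinearMap.toMatrix₂_comp_compl₂ b b b b, LinearMap.toMatrix_toLin, hM])
    have hpres x y : B (toLin b b M x) (toLin b b M y) = B x y := LinearMap.congr_fun₂ hf x y
    exact ⟨.ofInjectiveEndo _ (LinearMap.injective_of_apply_self_eq hB fun x => hpres x x),
      LinearMap.toMatrix_toLin b b M, hpres⟩

theorem LinearMap.eq_zero_of_dotProduct_toMatrix₂_mulVec_self_eq_zero {R V ι : Type*}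
    [CommRing R] [AddCommGroup V] [Module R V] [Fintype ι] [DecidableEq ι] {σ : R →+* R}
    (b : Module.Basis ι R V) {B : V →ₗ[R] V →ₛₗ[σ] R} (hB : ∀ x, B x x = 0 → x = 0)
    {w : ι → R} (hw : w ⬝ᵥ toMatrix₂ b b B *ᵥ (σ ∘ w) = 0) : w = 0 := by
  refine b.equivFun.symm.map_eq_zero_iff.mp (hB _ ?_)
  rw [← dotProduct_toMatrix₂_mulVec]
  exact hw

section Coercivity

variable {K ι : Type*} [NormedField K] [ProperSpace K] [Fintype ι]
  {Q : (ι → K) → K} {N : K → K} {C : ℝ}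

theorem exists_sq_norm_le_mul_norm_of_homogeneous (hQ : Continuous Q)
    (hQ0 : ∀ w, Q w = 0 → w = 0) (hQN : ∀ c w, Q (c • w) = N c * Q w)
    (hN : ∀ c, ‖c‖ ^ 2 ≤ C * ‖N c‖) : ∃ D, ∀ w, ‖w‖ ^ 2 ≤ D * ‖Q w‖ := by
  have hC : 0 ≤ C := by nlinarith [hN 1, norm_nonneg (N 1), norm_one (α := K)]
  obtain ⟨m, hm, hmQ⟩ := (isCompact_sphere (0 : ι → K) 1).exists_forall_le'
    (continuous_norm.comp hQ).continuousOn (a := 0) fun u hu =>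
      norm_pos_iff.mpr fun hQu => by simp [hQ0 u hQu] at hu
  refine ⟨C / m, fun w => ?_⟩
  rcases eq_or_ne w 0 with rfl | hw
  · rw [norm_zero, zero_pow two_ne_zero]
    positivity
  -- normalizing by a coordinate of maximal norm lands on the unit sphere of the sup norm
  obtain ⟨j, -⟩ := Function.ne_iff.mp hw
  have : Nonempty ι := ⟨j⟩
  obtain ⟨i, hi : ‖w i‖ = ‖w‖⟩ := (IsGreatest.pi_norm w).1
  have hwi : w i ≠ 0 := norm_ne_zero_iff.mp (hi ▸ norm_ne_zero_iff.mpr hw)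
  have hu : (w i)⁻¹ • w ∈ Metric.sphere 0 1 := by
    rw [mem_sphere_zero_iff_norm, norm_smul, norm_inv, ← hi,
      inv_mul_cancel₀ (norm_ne_zero_iff.mpr hwi)]
  have hQw : Q w = N (w i) * Q ((w i)⁻¹ • w) := by rw [← hQN, smul_inv_smul₀ hwi]
  calc ‖w‖ ^ 2 = ‖w i‖ ^ 2 := by rw [hi]
    _ ≤ C * ‖N (w i)‖ := hN _
    _ ≤ C * ‖N (w i)‖ * (‖Q ((w i)⁻¹ • w)‖ / m) :=
        le_mul_of_one_le_right (by positivity) ((one_le_div hm).mpr (hmQ _ hu))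
    _ = C / m * ‖Q w‖ := by rw [hQw, norm_mul]; ring

theorem isCompact_setOf_eq_of_homogeneous (hQ : Continuous Q)
    (hQ0 : ∀ w, Q w = 0 → w = 0) (hQN : ∀ c w, Q (c • w) = N c * Q w)
    (hN : ∀ c, ‖c‖ ^ 2 ≤ C * ‖N c‖) (a : K) : IsCompact {w | Q w = a} := by
  obtain ⟨D, hD⟩ := exists_sq_norm_le_mul_norm_of_homogeneous hQ hQ0 hQN hN
  refine Metric.isCompact_of_isClosed_isBounded (isClosed_eq hQ continuous_const) ?_
  refine isBounded_iff_forall_norm_le.mpr ⟨√(D * ‖a‖), fun w (hw : Q w = a) => ?_⟩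
  simpa [hw] using Real.abs_le_sqrt (hD w)

end Coercivity

theorem isCompact_setOf_transpose_mul_mul_map_eq {K ι : Type*} [NormedField K] [ProperSpace K]
    [Fintype ι] {σ : K →+* K} (hσ : Continuous σ) {C : ℝ} (hσC : ∀ c, ‖c‖ ≤ C * ‖σ c‖)
    {G : Matrix ι ι K} (hG : ∀ w, w ⬝ᵥ G *ᵥ (σ ∘ w) = 0 → w = 0) :
    IsCompact {M : Matrix ι ι K | Mᵀ * G * M.map σ = G} := by
  set Q : (ι → K) → K := fun w => w ⬝ᵥ G *ᵥ (σ ∘ w)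
  have hQ : Continuous Q := continuous_id.dotProduct
    (continuous_const.matrix_mulVec (continuous_pi fun i => hσ.comp (continuous_apply i)))
  have hQN c w : Q (c • w) = c * σ c * Q w := by
    have hσw : σ ∘ (c • w) = σ c • (σ ∘ w) := by ext; simp
    simp only [Q, hσw, mulVec_smul, dotProduct_smul, smul_dotProduct, smul_eq_mul]
    ring
  have hN c : ‖c‖ ^ 2 ≤ C * ‖c * σ c‖ := by
    rw [norm_mul, sq, mul_left_comm]
    exact mul_le_mul_of_nonneg_left (hσC c) (norm_nonneg c)
  have hdiag (M : Matrix ι ι K) (j : ι) : (Mᵀ * G * M.map σ) j j = Q (Mᵀ j) := by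
    simp only [Q, mul_apply, transpose_apply, map_apply, dotProduct, mulVec, Function.comp_apply,
      Finset.mul_sum, Finset.sum_mul, mul_assoc]
    exact Finset.sum_comm
  have hcolumns : IsCompact (transpose '' Set.univ.pi fun j => {w | Q w = G j j}) :=
    (isCompact_univ_pi fun j => isCompact_setOf_eq_of_homogeneous hQ hG hQN hN (G j j)).image
      continuous_id.matrix_transpose
  refine hcolumns.of_isClosed_subset (isClosed_eq ?_ continuous_const) fun M hM =>
    ⟨Mᵀ, fun j _ => (hdiag M j).symm.trans (congrFun (congrFun hM j) j), transpose_transpose M⟩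
  exact (continuous_id.matrix_transpose.matrix_mul continuous_const).matrix_mul
    (continuous_id.matrix_map hσ)

theorem stmt12_general (p : ℕ) [Fact p.Prime]
    (F K : Type*) [Field F] [NormedField K]
    [Algebra ℚ_[p] F] [FiniteDimensional ℚ_[p] F]
    [Algebra F K] [FiniteDimensional F K]
    [Algebra ℚ_[p] K] [IsScalarTower ℚ_[p] F K]
    (hnorm : ∀ c : ℚ_[p], ‖algebraMap ℚ_[p] K c‖ = ‖c‖)
    (σ : K ≃ₐ[F] K)
    (V : Type*) [AddCommGroup V] [Module K V]
    (h : V → V → K)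
    (hlin : ∀ (c : K) (x x' y : V), h (c • x + x') y = c * h x y + h x' y)
    (hherm : ∀ x y, h y x = σ (h x y))
    (haniso : ∀ v : V, h v v = 0 → v = 0) :
    ∀ (n : ℕ) (b : Module.Basis (Fin n) K V),
      IsCompact {M : Matrix (Fin n) (Fin n) K |
        ∃ g : V ≃ₗ[K] V, LinearMap.toMatrix b b (g : V →ₗ[K] V) = M ∧
          ∀ x y : V, h (g x) (g y) = h x y} := by
  intro n b
  let _ : NormedSpace ℚ_[p] K := ⟨fun c x => by rw [Algebra.smul_def, norm_mul, hnorm]⟩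
  have : FiniteDimensional ℚ_[p] K := .trans ℚ_[p] F K
  have : ProperSpace K := FiniteDimensional.proper ℚ_[p] K
  let e : K ≃L[ℚ_[p]] K := (σ.restrictScalars ℚ_[p]).toLinearEquiv.toContinuousLinearEquiv
  let B := LinearMap.ofHermitian (σ : K →+* K) h hlin hherm
  have hB : ∀ x, B x x = 0 → x = 0 := haniso
  have hU := isCompact_setOf_transpose_mul_mul_map_eq (σ := (σ : K →+* K)) e.continuous
    (e.antilipschitz.le_mul_norm (map_zero e))
    (fun _ => LinearMap.eq_zero_of_dotProduct_toMatrix₂_mulVec_self_eq_zero b hB)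
  rwa [← setOf_toMatrix_isometry_eq b hB] at hU

/-- Let `K/F` be a quadratic extension of a finite extension `F` of `ℚ_p`
(where `K` carries the `p`-adic topology, encoded by a field norm extending that of `ℚ_p`).
If `(V, h)` is a finite-dimensional anisotropic hermitian space over `K`, then the unitary
group `U(V, h) = {g ∈ GL_K(V) : h (g x) (g y) = h x y}` is a compact subgroup of
`GL_K(V)`, i.e. its image in matrices with respect to any basis is compact. -/
theorem stmt12 (p : ℕ) [Fact p.Prime]
    (F K : Type*) [Field F] [NormedField K]
    [Algebra ℚ_[p] F] [FiniteDimensional ℚ_[p] F]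
    [Algebra F K] [FiniteDimensional F K] (hdim : Module.finrank F K = 2)
    [Algebra ℚ_[p] K] [IsScalarTower ℚ_[p] F K]
    (hnorm : ∀ c : ℚ_[p], ‖algebraMap ℚ_[p] K c‖ = ‖c‖)
    (σ : K ≃ₐ[F] K) (hσ : σ ≠ AlgEquiv.refl)
    (V : Type*) [AddCommGroup V] [Module K V] [FiniteDimensional K V]
    (h : V → V → K)
    (hlin : ∀ (c : K) (x x' y : V), h (c • x + x') y = c * h x y + h x' y)
    (hherm : ∀ x y, h y x = σ (h x y))
    (haniso : ∀ v : V, h v v = 0 → v = 0) :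
    ∀ (n : ℕ) (b : Module.Basis (Fin n) K V),
      IsCompact {M : Matrix (Fin n) (Fin n) K |
        ∃ g : V ≃ₗ[K] V, LinearMap.toMatrix b b (g : V →ₗ[K] V) = M ∧
          ∀ x y : V, h (g x) (g y) = h x y} :=
  stmt12_general p F K hnorm σ V h hlin hherm haniso
end

section
/- There is an R-module isomorphism ⋀^n(L ⊗_R M) ≅ L^{⊗n} ⊗_R ⋀^n M determined by sending (ℓ_1 ⊗ m_1) ∧ ⋯ ∧ (ℓ_n ⊗ m_n) to (ℓ_1 ⊗ ⋯ ⊗ ℓ_n) ⊗ (m_1 ∧ ⋯ ∧ m_n). -/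
open scoped TensorProduct

/-!
A basis of the rank-one module `L` is an isomorphism `e : L ≃ R`. It identifies `L ⊗ M` with `M`
via `ℓ ⊗ m ↦ e ℓ • m`, and `⨂^n L` with `R` via `ℓ₁ ⊗ ⋯ ⊗ ℓₙ ↦ ∏ e ℓᵢ`. Functoriality of `⋀^n`
gives `⋀^n (L ⊗ M) ≃ ⋀^n M`, and by multilinearity `(ℓ₁ ⊗ m₁) ∧ ⋯ ∧ (ℓₙ ⊗ mₙ)` goes to
`(∏ e ℓᵢ) • m₁ ∧ ⋯ ∧ mₙ`, which is the image of `(ℓ₁ ⊗ ⋯ ⊗ ℓₙ) ⊗ (m₁ ∧ ⋯ ∧ mₙ)` under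
`⨂^n L ⊗ ⋀^n M ≃ R ⊗ ⋀^n M ≃ ⋀^n M`.
-/

namespace exteriorPower

variable {R M N : Type*} [CommRing R] [AddCommGroup M] [Module R M] [AddCommGroup N] [Module R N]

noncomputable def congr (n : ℕ) (e : M ≃ₗ[R] N) : ⋀[R]^n M ≃ₗ[R] ⋀[R]^n N :=
  LinearEquiv.ofLinearMap (map n e) (map n e.symm)
    (by rw [← map_comp, LinearEquiv.comp_coe, LinearEquiv.symm_trans_self]; exact map_id)
    (by rw [← map_comp, LinearEquiv.comp_coe, LinearEquiv.self_trans_symm]; exact map_id)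

@[simp]
theorem congr_ιMulti (n : ℕ) (e : M ≃ₗ[R] N) (m : Fin n → M) :
    congr n e (ιMulti R n m) = ιMulti R n (e ∘ m) := by
  rw [congr, LinearEquiv.coe_ofLinearMap, map_apply_ιMulti, LinearEquiv.coe_coe]

end exteriorPower

section RankOne

variable {R L M : Type*} [CommRing R] [AddCommGroup L] [Module R L] [AddCommGroup M] [Module R M]

noncomputable def piTensorEquivOfEquivRing (n : ℕ) (e : L ≃ₗ[R] R) : (⨂[R]^n L) ≃ₗ[R] R :=
  PiTensorProduct.congr (fun _ => e) ≪≫ₗ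
    (PiTensorProduct.constantBaseRingEquiv (Fin n) R).toLinearEquiv

@[simp]
theorem piTensorEquivOfEquivRing_tprod (n : ℕ) (e : L ≃ₗ[R] R) (ℓ : Fin n → L) :
    piTensorEquivOfEquivRing n e (PiTensorProduct.tprod R ℓ) = ∏ i, e (ℓ i) := by
  simp [piTensorEquivOfEquivRing]

noncomputable def exteriorPowerTensorEquivOfEquivRing (n : ℕ) (e : L ≃ₗ[R] R) :
    ⋀[R]^n (L ⊗[R] M) ≃ₗ[R] (⨂[R]^n L) ⊗[R] ⋀[R]^n M :=
  exteriorPower.congr n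
      (TensorProduct.congr e (LinearEquiv.refl R M) ≪≫ₗ TensorProduct.lid R M) ≪≫ₗ
    (TensorProduct.lid R _).symm ≪≫ₗ
    TensorProduct.congr (piTensorEquivOfEquivRing n e).symm (LinearEquiv.refl R _)

theorem exteriorPowerTensorEquivOfEquivRing_ιMulti (n : ℕ) (e : L ≃ₗ[R] R) (ℓ : Fin n → L)
    (m : Fin n → M) :
    exteriorPowerTensorEquivOfEquivRing n e (exteriorPower.ιMulti R n fun i => ℓ i ⊗ₜ[R] m i) =
      PiTensorProduct.tprod R ℓ ⊗ₜ[R] exteriorPower.ιMulti R n m := by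
  have htprod :
      (piTensorEquivOfEquivRing n e).symm (∏ i, e (ℓ i)) = PiTensorProduct.tprod R ℓ := by
    rw [LinearEquiv.symm_apply_eq, piTensorEquivOfEquivRing_tprod]
  simp [exteriorPowerTensorEquivOfEquivRing, Function.comp_def, AlternatingMap.map_smul_univ,
    TensorProduct.smul_tmul', htprod]

end RankOne

theorem stmt14_general (R : Type*) [CommRing R]
    (L M : Type*) [AddCommGroup L] [Module R L] [AddCommGroup M] [Module R M]
    (n : ℕ) (bL : Module.Basis (Fin 1) R L) :
    ∃ e : (⋀[R]^n (L ⊗[R] M)) ≃ₗ[R] ((⨂[R]^n L) ⊗[R] (⋀[R]^n M)),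
      ∀ (ℓ : Fin n → L) (m : Fin n → M),
        e ⟨ExteriorAlgebra.ιMulti R n (fun i => ℓ i ⊗ₜ[R] m i),
            ExteriorAlgebra.ιMulti_range R n (Set.mem_range_self _)⟩ =
          (PiTensorProduct.tprod R ℓ) ⊗ₜ[R]
            ⟨ExteriorAlgebra.ιMulti R n m,
              ExteriorAlgebra.ιMulti_range R n (Set.mem_range_self _)⟩ :=
  ⟨exteriorPowerTensorEquivOfEquivRing n (bL.equivFun ≪≫ₗ LinearEquiv.funUnique (Fin 1) R R),
    exteriorPowerTensorEquivOfEquivRing_ιMulti n _⟩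

/-- For a commutative ring `R`, a free `R`-module `L` of rank 1 and a free
`R`-module `M` of rank `n`, there is an `R`-module isomorphism
`⋀^n (L ⊗ M) ≅ L^{⊗n} ⊗ ⋀^n M` sending `(ℓ₁ ⊗ m₁) ∧ ⋯ ∧ (ℓₙ ⊗ mₙ)` to
`(ℓ₁ ⊗ ⋯ ⊗ ℓₙ) ⊗ (m₁ ∧ ⋯ ∧ mₙ)`. -/
theorem stmt14 (R : Type*) [CommRing R]
    (L M : Type*) [AddCommGroup L] [Module R L] [AddCommGroup M] [Module R M]
    (n : ℕ) (bL : Module.Basis (Fin 1) R L) (bM : Module.Basis (Fin n) R M) :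
    ∃ e : (⋀[R]^n (L ⊗[R] M)) ≃ₗ[R] ((⨂[R]^n L) ⊗[R] (⋀[R]^n M)),
      ∀ (ℓ : Fin n → L) (m : Fin n → M),
        e ⟨ExteriorAlgebra.ιMulti R n (fun i => ℓ i ⊗ₜ[R] m i),
            ExteriorAlgebra.ιMulti_range R n (Set.mem_range_self _)⟩ =
          (PiTensorProduct.tprod R ℓ) ⊗ₜ[R]
            ⟨ExteriorAlgebra.ιMulti R n m,
              ExteriorAlgebra.ιMulti_range R n (Set.mem_range_self _)⟩ :=
  stmt14_general R L M n bL
end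

section
/- For every nonzero v_0 ∈ V_0 and x, y ∈ W there is a unique h_W(x, y) ∈ K with h(x(v_0), y(v_0)) = h_W(x, y) · h_0(v_0, v_0), and h_W(x, y) is independent of the choice of v_0 ≠ 0. The resulting form h_W on W = Hom_K(V_0, V) is a nondegenerate hermitian form, and its Gram determinant satisfies det(h_W) = det(h) · h_0(v_0, v_0)^{−2}; in particular, det(h_W) and det(h) have the same class in F×/Nm_{K/F}(K×). -/
/-!
Since `V₀` is a line, evaluation at a fixed `e ≠ 0` is an isomorphism `W ≃ V`, and
`h_W(x, y) = h(x e, y e) / h₀(e, e)`; replacing `e` by `c • e` multiplies both `h(x e, y e)` and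
`h₀(e, e)` by `c σ(c)`, so this does not depend on `e`. A change of basis with matrix `P` turns a
Gram matrix `G` into `Pᵀ G P^σ`; as `h₀(e, e)` is fixed by `σ`, this gives
`det h_W = det h · c σ(c)` with `c = det P / h₀(e, e)`.
-/

open Module
open scoped Matrix

section Sesquilinear

variable {R M : Type*} [CommRing R] [AddCommGroup M] [Module R M] {σ : R →+* R}

def sesqOfLeftLinearHermitian (h : M → M → R)
    (hlin : ∀ (c : R) (x x' y : M), h (c • x + x') y = c * h x y + h x' y)
    (hherm : ∀ x y, h y x = σ (h x y)) : M →ₗ[R] M →ₛₗ[σ] R :=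
  have hzero : ∀ y, h 0 y = 0 := fun y => by
    simpa using hlin 1 0 0 y
  have hsmul : ∀ (c : R) x y, h (c • x) y = c * h x y := fun c x y => by
    simpa [hzero] using hlin c x 0 y
  have hadd : ∀ x x' y, h (x + x') y = h x y + h x' y := fun x x' y => by
    simpa using hlin 1 x x' y
  LinearMap.mk₂'ₛₗ (RingHom.id R) σ h hadd hsmul
    (fun x y y' => by rw [hherm, hadd, map_add, ← hherm, ← hherm])
    (fun c x y => by rw [hherm, hsmul, map_mul, ← hherm, smul_eq_mul])

theorem LinearMap.toMatrix₂_eq_of {ι : Type*} [Fintype ι] [DecidableEq ι]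
    (B : M →ₗ[R] M →ₛₗ[σ] R) (b : Basis ι R M) :
    LinearMap.toMatrix₂ b b B = Matrix.of fun i j => B (b i) (b j) := by
  ext i j
  simp [LinearMap.toMatrix₂_apply]

theorem LinearMap.toMatrix₂_basis_change {ι : Type*} [Fintype ι] [DecidableEq ι]
    (B : M →ₗ[R] M →ₛₗ[σ] R) (b c : Basis ι R M) :
    LinearMap.toMatrix₂ c c B =
      (b.toMatrix c)ᵀ * LinearMap.toMatrix₂ b b B * (b.toMatrix c).map σ := by
  ext i j
  conv_lhs => rw [LinearMap.toMatrix₂_apply, ← b.sum_toMatrix_smul_self c i,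
    ← b.sum_toMatrix_smul_self c j]
  simp only [map_sum, map_smulₛₗ, LinearMap.sum_apply, LinearMap.smul_apply, Matrix.mul_apply,
    Matrix.transpose_apply, Matrix.map_apply, LinearMap.toMatrix₂_apply, Finset.sum_mul,
    Finset.mul_sum, smul_eq_mul, RingHom.id_apply]
  exact Finset.sum_congr rfl fun k _ => Finset.sum_congr rfl fun l _ => by ring

theorem LinearMap.det_toMatrix₂_basis_change {ι : Type*} [Fintype ι] [DecidableEq ι]
    (B : M →ₗ[R] M →ₛₗ[σ] R) (b c : Basis ι R M) :
    (LinearMap.toMatrix₂ c c B).det =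
      (b.toMatrix c).det * σ (b.toMatrix c).det * (LinearMap.toMatrix₂ b b B).det := by
  rw [LinearMap.toMatrix₂_basis_change B b c, Matrix.det_mul, Matrix.det_mul, Matrix.det_transpose,
    σ.map_det]
  simp only [RingHom.mapMatrix_apply]
  ring

end Sesquilinear

section OneDimensional

variable {K V₀ V : Type*} [Field K] [AddCommGroup V₀] [Module K V₀] [AddCommGroup V] [Module K V]

theorem LinearMap.SeparatingLeft.apply_self_ne_zero {σ : K →+* K} {B : V₀ →ₗ[K] V₀ →ₛₗ[σ] K}
    (hB : B.SeparatingLeft) (hV₀ : finrank K V₀ = 1) {e : V₀} (he : e ≠ 0) : B e e ≠ 0 := by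
  intro hee
  refine he (hB e fun y => ?_)
  obtain ⟨c, rfl⟩ := (finrank_eq_one_iff_of_nonzero' e he).mp hV₀ y
  rw [map_smulₛₗ, hee, smul_zero]

noncomputable def evalEquivOfFinrankEqOne (hV₀ : finrank K V₀ = 1) {e : V₀} (he : e ≠ 0) :
    (V₀ →ₗ[K] V) ≃ₗ[K] V :=
  ((FiniteDimensional.basisSingleton Unit hV₀ e he).constr K).symm.trans
    (LinearEquiv.funUnique Unit K V)

@[simp]
theorem evalEquivOfFinrankEqOne_apply (hV₀ : finrank K V₀ = 1) {e : V₀} (he : e ≠ 0)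
    (x : V₀ →ₗ[K] V) : evalEquivOfFinrankEqOne hV₀ he x = x e := by
  simp [evalEquivOfFinrankEqOne]

variable {σ : K →+* K} (B₀ : V₀ →ₗ[K] V₀ →ₛₗ[σ] K) (B : V →ₗ[K] V →ₛₗ[σ] K) (e : V₀)

/-- The form `h_W`; by `apply_eq_homForm_mul` it does not depend on the choice of `e`. -/
noncomputable def homForm : (V₀ →ₗ[K] V) →ₗ[K] (V₀ →ₗ[K] V) →ₛₗ[σ] K :=
  (B₀ e e)⁻¹ • (B.comp (LinearMap.applyₗ e)).compl₂ (LinearMap.applyₗ e)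

@[simp]
theorem homForm_apply (x y : V₀ →ₗ[K] V) : homForm B₀ B e x y = (B₀ e e)⁻¹ * B (x e) (y e) := by
  simp [homForm]

variable {B₀ B e}

theorem apply_eq_homForm_mul (hV₀ : finrank K V₀ = 1) (he : e ≠ 0) (hee : B₀ e e ≠ 0)
    (v : V₀) (x y : V₀ →ₗ[K] V) : B (x v) (y v) = homForm B₀ B e x y * B₀ v v := by
  obtain ⟨c, rfl⟩ := (finrank_eq_one_iff_of_nonzero' e he).mp hV₀ v
  simp only [homForm_apply, map_smul, map_smulₛₗ, LinearMap.smul_apply, smul_eq_mul]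
  field_simp

theorem homForm_swap (hB : ∀ x y, B y x = σ (B x y)) (hee : σ (B₀ e e) = B₀ e e)
    (x y : V₀ →ₗ[K] V) : homForm B₀ B e y x = σ (homForm B₀ B e x y) := by
  rw [homForm_apply, homForm_apply, map_mul, map_inv₀, hee, hB]

theorem homForm_separatingLeft (hB : B.SeparatingLeft) (hV₀ : finrank K V₀ = 1) (he : e ≠ 0)
    (hee : B₀ e e ≠ 0) : (homForm B₀ B e).SeparatingLeft := by
  set ev := evalEquivOfFinrankEqOne (V := V) hV₀ he
  intro x hx
  refine ev.map_eq_zero_iff.mp (hB _ fun w => ?_)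
  have hw : ev.symm w e = w := by
    rw [← evalEquivOfFinrankEqOne_apply hV₀ he, LinearEquiv.apply_symm_apply]
  simpa [ev, hw, hee] using hx (ev.symm w)

theorem toMatrix₂_homForm {ι : Type*} [Fintype ι] [DecidableEq ι] (hV₀ : finrank K V₀ = 1)
    (he : e ≠ 0) (bW : Basis ι K (V₀ →ₗ[K] V)) :
    LinearMap.toMatrix₂ bW bW (homForm B₀ B e) =
      (B₀ e e)⁻¹ • LinearMap.toMatrix₂ (bW.map (evalEquivOfFinrankEqOne hV₀ he))
        (bW.map (evalEquivOfFinrankEqOne hV₀ he)) B := by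
  ext i j
  simp [LinearMap.toMatrix₂_apply]

theorem toMatrix₂_homForm_of_apply_eq {ι : Type*} [Fintype ι] [DecidableEq ι]
    (hV₀ : finrank K V₀ = 1) (he : e ≠ 0) (hee : B₀ e e ≠ 0) {v : V₀} (hv : B₀ v v ≠ 0)
    (b : Basis ι K V) (bW : Basis ι K (V₀ →ₗ[K] V)) (hbW : ∀ i, bW i v = b i) :
    LinearMap.toMatrix₂ bW bW (homForm B₀ B e) = (B₀ v v)⁻¹ • LinearMap.toMatrix₂ b b B := by
  ext i j
  simp only [LinearMap.toMatrix₂_apply, Matrix.smul_apply, smul_eq_mul, ← hbW,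
    apply_eq_homForm_mul hV₀ he hee v]
  field_simp

end OneDimensional

theorem stmt15_general
    (F K : Type*) [Field F] [Field K] [Algebra F K]
    (σ : K ≃ₐ[F] K)
    (V₀ V : Type*) [AddCommGroup V₀] [Module K V₀] [AddCommGroup V] [Module K V]
    (hd0 : Module.finrank K V₀ = 1)
    (h₀ : V₀ → V₀ → K)
    (h₀lin : ∀ (c : K) (x x' y : V₀), h₀ (c • x + x') y = c * h₀ x y + h₀ x' y)
    (h₀herm : ∀ x y, h₀ y x = σ (h₀ x y))
    (h₀nd : ∀ x : V₀, (∀ y : V₀, h₀ x y = 0) → x = 0)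
    (h : V → V → K)
    (hlin : ∀ (c : K) (x x' y : V), h (c • x + x') y = c * h x y + h x' y)
    (hherm : ∀ x y, h y x = σ (h x y))
    (hnd : ∀ x : V, (∀ y : V, h x y = 0) → x = 0) :
    ∃ hW : (V₀ →ₗ[K] V) → (V₀ →ₗ[K] V) → K,
      (∀ v₀ : V₀, v₀ ≠ 0 → ∀ x y, h (x v₀) (y v₀) = hW x y * h₀ v₀ v₀) ∧
      (∀ hW' : (V₀ →ₗ[K] V) → (V₀ →ₗ[K] V) → K,
        (∃ v₀ : V₀, v₀ ≠ 0 ∧ ∀ x y, h (x v₀) (y v₀) = hW' x y * h₀ v₀ v₀) →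
        hW' = hW) ∧
      (∀ (c : K) (x x' y : V₀ →ₗ[K] V), hW (c • x + x') y = c * hW x y + hW x' y) ∧
      (∀ x y, hW y x = σ (hW x y)) ∧
      (∀ x : V₀ →ₗ[K] V, (∀ y, hW x y = 0) → x = 0) ∧
      (∀ v₀ : V₀, v₀ ≠ 0 →
        ∀ (b : Module.Basis (Fin 2) K V) (bW : Module.Basis (Fin 2) K (V₀ →ₗ[K] V)),
          (∀ i, bW i v₀ = b i) →
          Matrix.det (Matrix.of fun i j => hW (bW i) (bW j)) =
            Matrix.det (Matrix.of fun i j => h (b i) (b j)) * ((h₀ v₀ v₀)⁻¹) ^ 2) ∧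
      (∀ (b : Module.Basis (Fin 2) K V) (bW : Module.Basis (Fin 2) K (V₀ →ₗ[K] V)),
        ∃ c : K, c ≠ 0 ∧
          Matrix.det (Matrix.of fun i j => hW (bW i) (bW j)) =
            Matrix.det (Matrix.of fun i j => h (b i) (b j)) * (c * σ c)) := by
  set B₀ := sesqOfLeftLinearHermitian (σ := (σ : K →+* K)) h₀ h₀lin h₀herm
  set B := sesqOfLeftLinearHermitian (σ := (σ : K →+* K)) h hlin hherm
  have : Nontrivial V₀ := Module.nontrivial_of_finrank_eq_succ hd0
  obtain ⟨e, he⟩ := exists_ne (0 : V₀)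
  have hB₀ : ∀ {v}, v ≠ 0 → B₀ v v ≠ 0 := fun hv =>
    LinearMap.SeparatingLeft.apply_self_ne_zero (B := B₀) h₀nd hd0 hv
  have hσe : σ (h₀ e e) = h₀ e e := (h₀herm e e).symm
  have gram : ∀ b : Basis (Fin 2) K V,
      (Matrix.of fun i j => h (b i) (b j)) = LinearMap.toMatrix₂ b b B :=
    fun b => (LinearMap.toMatrix₂_eq_of B b).symm
  have hW_spec := apply_eq_homForm_mul (B := B) hd0 he (hB₀ he)
  refine ⟨fun x y => homForm B₀ B e x y, fun v₀ _ => hW_spec v₀, ?_,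
    fun c x x' y => by simp only [map_add, map_smul, LinearMap.add_apply, LinearMap.smul_apply,
      smul_eq_mul],
    homForm_swap hherm hσe, homForm_separatingLeft hnd hd0 he (hB₀ he), ?_, ?_⟩
  · rintro hW' ⟨v₀, hv₀, hW'v₀⟩
    funext x y
    exact mul_right_cancel₀ (hB₀ hv₀)
      ((hW'v₀ x y).symm.trans (hW_spec v₀ x y))
  · intro v₀ hv₀ b bW hbW
    rw [← LinearMap.toMatrix₂_eq_of, gram,
      toMatrix₂_homForm_of_apply_eq hd0 he (hB₀ he) (hB₀ hv₀) b bW hbW, Matrix.det_smul,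
      Fintype.card_fin, mul_comm]
    rfl
  · intro b bW
    set b' := bW.map (evalEquivOfFinrankEqOne hd0 he)
    have hQ : (b.toMatrix b').det ≠ 0 := by
      rw [← Basis.det_apply]
      exact (b.isUnit_det b').ne_zero
    refine ⟨(b.toMatrix b').det * (h₀ e e)⁻¹, mul_ne_zero hQ (inv_ne_zero (hB₀ he)), ?_⟩
    rw [← LinearMap.toMatrix₂_eq_of, gram,
      toMatrix₂_homForm hd0 he, Matrix.det_smul, LinearMap.det_toMatrix₂_basis_change B b b',
      RingHom.coe_coe, map_mul, map_inv₀, hσe, Fintype.card_fin]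
    change (h₀ e e)⁻¹ ^ 2 * _ = _
    ring

/-- Let `(V₀, h₀)` be a 1-dimensional and `(V, h)` a 2-dimensional
nondegenerate hermitian space over `K`, and `W = Hom_K(V₀, V)`. There is a (unique) form
`h_W` on `W` with `h (x v₀) (y v₀) = h_W x y · h₀ v₀ v₀` for every nonzero `v₀`
(independently of `v₀`); it is a nondegenerate hermitian form, its Gram determinant (for a
basis of `W` matching a basis of `V` via `v₀`) equals `det h · (h₀ v₀ v₀)⁻²`, and in
particular `det h_W` and `det h` have the same class modulo `Nm_{K/F}(K×)`. -/
theorem stmt15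
    (F K : Type*) [Field F] [Field K] [Algebra F K]
    (hchar : (2 : F) ≠ 0)
    [FiniteDimensional F K] (hdim : Module.finrank F K = 2)
    (σ : K ≃ₐ[F] K) (hσ : σ ≠ AlgEquiv.refl)
    (V₀ V : Type*) [AddCommGroup V₀] [Module K V₀] [AddCommGroup V] [Module K V]
    [FiniteDimensional K V₀] [FiniteDimensional K V]
    (hd0 : Module.finrank K V₀ = 1) (hd : Module.finrank K V = 2)
    (h₀ : V₀ → V₀ → K)
    (h₀lin : ∀ (c : K) (x x' y : V₀), h₀ (c • x + x') y = c * h₀ x y + h₀ x' y)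
    (h₀herm : ∀ x y, h₀ y x = σ (h₀ x y))
    (h₀nd : ∀ x : V₀, (∀ y : V₀, h₀ x y = 0) → x = 0)
    (h : V → V → K)
    (hlin : ∀ (c : K) (x x' y : V), h (c • x + x') y = c * h x y + h x' y)
    (hherm : ∀ x y, h y x = σ (h x y))
    (hnd : ∀ x : V, (∀ y : V, h x y = 0) → x = 0) :
    ∃ hW : (V₀ →ₗ[K] V) → (V₀ →ₗ[K] V) → K,
      (∀ v₀ : V₀, v₀ ≠ 0 → ∀ x y, h (x v₀) (y v₀) = hW x y * h₀ v₀ v₀) ∧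
      (∀ hW' : (V₀ →ₗ[K] V) → (V₀ →ₗ[K] V) → K,
        (∃ v₀ : V₀, v₀ ≠ 0 ∧ ∀ x y, h (x v₀) (y v₀) = hW' x y * h₀ v₀ v₀) →
        hW' = hW) ∧
      (∀ (c : K) (x x' y : V₀ →ₗ[K] V), hW (c • x + x') y = c * hW x y + hW x' y) ∧
      (∀ x y, hW y x = σ (hW x y)) ∧
      (∀ x : V₀ →ₗ[K] V, (∀ y, hW x y = 0) → x = 0) ∧
      (∀ v₀ : V₀, v₀ ≠ 0 →
        ∀ (b : Module.Basis (Fin 2) K V) (bW : Module.Basis (Fin 2) K (V₀ →ₗ[K] V)),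
          (∀ i, bW i v₀ = b i) →
          Matrix.det (Matrix.of fun i j => hW (bW i) (bW j)) =
            Matrix.det (Matrix.of fun i j => h (b i) (b j)) * ((h₀ v₀ v₀)⁻¹) ^ 2) ∧
      (∀ (b : Module.Basis (Fin 2) K V) (bW : Module.Basis (Fin 2) K (V₀ →ₗ[K] V)),
        ∃ c : K, c ≠ 0 ∧
          Matrix.det (Matrix.of fun i j => hW (bW i) (bW j)) =
            Matrix.det (Matrix.of fun i j => h (b i) (b j)) * (c * σ c)) :=
  stmt15_general F K σ V₀ V hd0 h₀ h₀lin h₀herm h₀nd h hlin hherm hnd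
end
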